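/- Let φ(z) = z/(1+z) and let f : [0,∞) → ℝ be smooth. For every k ∈ ℕ there exist smooth bounded functions c̃^k_{j,φ}, j = 0,…,k, with c̃^k_{k,φ} = 1, such that ∂_z (φ ∂_z)^k f = Σ_{j=0}^k c̃^k_{j,φ} (φ ∂_z)^j (∂_z f). -/

import Mathlib

open Set Polynomial

/-- The conormal vertical derivative `Z₃ = φ(z) ∂_z` with `φ(z) = z/(1+z)`. -/
noncomputable def Zop : (ℝ → ℝ) → ℝ → ℝ := fun g z => (z / (1 + z)) * deriv g z

/-- coefficient polynomials, to be evaluated at `u = 1/(1+z)` -/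
noncomputable def Q : ℕ → ℕ → Polynomial ℝ
  | 0, 0 => 1
  | 0, _ + 1 => 0
  | (k+1), j =>
      X^2 * Q k j + (X^3 - X^2) * (Q k j).derivative +
        (if j = 0 then 0 else Q k (j-1))

lemma Q_eq_zero : ∀ k j, k < j → Q k j = 0 := by
  intro k
  induction k with
  | zero => intro j hj; match j, hj with
            | (j+1), _ => rfl
  | succ k ih =>
      intro j hj
      match j, hj with
      | (j+1), hj =>
        have h1 : Q k (j+1) = 0 := ih _ (by omega)
        have h2 : Q k j = 0 := ih _ (by omega)
        show X^2 * Q k (j+1) + (X^3 - X^2) * (Q k (j+1)).derivative +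
            (if j + 1 = 0 then 0 else Q k (j+1-1)) = 0
        simp [h1, h2]

lemma Q_diag : ∀ k, Q k k = 1 := by
  intro k
  induction k with
  | zero => rfl
  | succ k ih =>
      show X^2 * Q k (k+1) + (X^3 - X^2) * (Q k (k+1)).derivative +
          (if k + 1 = 0 then 0 else Q k (k+1-1)) = 1
      simp [Q_eq_zero k (k+1) (by omega), ih]

lemma Q_succ_eval (k j : ℕ) (u : ℝ) :
    (Q (k+1) j).eval u =
      u^2 * (Q k j).eval u + (u^3 - u^2) * ((Q k j).derivative).eval u +
        (if j = 0 then 0 else (Q k (j-1)).eval u) := by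
  show (X^2 * Q k j + (X^3 - X^2) * (Q k j).derivative +
      (if j = 0 then 0 else Q k (j-1))).eval u = _
  by_cases h : j = 0 <;> simp [h]

lemma one_add_ne (z : ℝ) (hz : z ∈ Ioi (-1:ℝ)) : (1:ℝ) + z ≠ 0 := by
  have : (-1:ℝ) < z := hz
  intro h; linarith

/-- smoothness of `Zop` on `Ioi (-1)` -/
lemma Zop_contDiffOn {g : ℝ → ℝ} (hg : ContDiffOn ℝ (⊤ : ℕ∞) g (Ioi (-1:ℝ))) :
    ContDiffOn ℝ (⊤ : ℕ∞) (Zop g) (Ioi (-1:ℝ)) := by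
  have hphi : ContDiffOn ℝ (⊤ : ℕ∞) (fun z : ℝ => z / (1 + z)) (Ioi (-1:ℝ)) := by
    apply ContDiffOn.div contDiffOn_id
    · exact (contDiff_const.add contDiff_id).contDiffOn
    · exact fun z hz => one_add_ne z hz
  exact hphi.mul (hg.deriv_of_isOpen isOpen_Ioi (by exact (by simp)))

lemma Zop_iter_contDiffOn {f : ℝ → ℝ} (hf : ContDiff ℝ (⊤ : ℕ∞) f) (k : ℕ) :
    ContDiffOn ℝ (⊤ : ℕ∞) (Zop^[k] f) (Ioi (-1:ℝ)) := by
  induction k with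
  | zero => exact hf.contDiffOn
  | succ k ih => rw [Function.iterate_succ_apply']; exact Zop_contDiffOn ih

lemma deriv_at_of_contDiffOn {g : ℝ → ℝ} (hg : ContDiffOn ℝ (⊤ : ℕ∞) g (Ioi (-1:ℝ)))
    {z : ℝ} (hz : z ∈ Ioi (-1:ℝ)) : DifferentiableAt ℝ g z :=
  ((hg z hz).contDiffAt (isOpen_Ioi.mem_nhds hz)).differentiableAt (by simp)

/-- derivative of `φ` -/
lemma hasDerivAt_phi {z : ℝ} (hz : z ∈ Ioi (-1:ℝ)) :
    HasDerivAt (fun z : ℝ => z / (1 + z)) (((1+z)⁻¹)^2) z := by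
  have h := (hasDerivAt_id z).div ((hasDerivAt_const z (1:ℝ)).add (hasDerivAt_id z))
    (one_add_ne z hz)
  refine h.congr_deriv ?_
  have hne := one_add_ne z hz
  simp only [Pi.add_apply, id]
  field_simp
  ring

lemma hasDerivAt_u {z : ℝ} (hz : z ∈ Ioi (-1:ℝ)) :
    HasDerivAt (fun z : ℝ => (1 + z)⁻¹) (-(((1+z)⁻¹)^2)) z := by
  have h := ((hasDerivAt_const z (1:ℝ)).add (hasDerivAt_id z)).inv (one_add_ne z hz)
  refine h.congr_deriv ?_
  have hne := one_add_ne z hz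
  simp only [Pi.add_apply, id]
  field_simp
  ring

lemma hasDerivAt_c (P : Polynomial ℝ) {z : ℝ} (hz : z ∈ Ioi (-1:ℝ)) :
    HasDerivAt (fun z : ℝ => P.eval ((1+z)⁻¹))
      (P.derivative.eval ((1+z)⁻¹) * (-(((1+z)⁻¹)^2))) z :=
  by have := (P.hasDerivAt ((1+z)⁻¹)).comp z (hasDerivAt_u hz); exact this

/-- key derivative formula for `Zop` -/
lemma deriv_Zop {g : ℝ → ℝ} (hg : ContDiffOn ℝ (⊤ : ℕ∞) g (Ioi (-1:ℝ)))
    {z : ℝ} (hz : z ∈ Ioi (-1:ℝ)) :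
    deriv (Zop g) z = ((1+z)⁻¹)^2 * deriv g z + (z / (1+z)) * deriv (deriv g) z := by
  have hg' : ContDiffOn ℝ (⊤ : ℕ∞) (deriv g) (Ioi (-1:ℝ)) :=
    hg.deriv_of_isOpen isOpen_Ioi (by simp)
  have h1 : HasDerivAt (deriv g) (deriv (deriv g) z) z :=
    (deriv_at_of_contDiffOn hg' hz).hasDerivAt
  have h := (hasDerivAt_phi hz).mul h1
  unfold Zop
  exact h.deriv

/-- the main identity on `Ioi (-1)` -/
lemma main_id {f : ℝ → ℝ} (hf : ContDiff ℝ (⊤ : ℕ∞) f) (k : ℕ) :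
    ∀ z ∈ Ioi (-1:ℝ), deriv (Zop^[k] f) z =
      ∑ j ∈ Finset.range (k+1), (Q k j).eval ((1+z)⁻¹) * (Zop^[j] (deriv f)) z := by
  induction k with
  | zero =>
      intro z hz
      simp [Q]
  | succ k ih =>
      intro z hz
      have hne := one_add_ne z hz
      have hf' : ContDiff ℝ (⊤ : ℕ∞) (deriv f) := by
        have h : ContDiff ℝ (((⊤ : ℕ∞) : WithTop ℕ∞) + 1) f := by
          convert hf using 2; exact_mod_cast top_add (1 : ℕ∞)
        exact (contDiff_succ_iff_deriv.mp h).2.2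
      have hp : z / (1 + z) = 1 - (1+z)⁻¹ := by field_simp; ring
      -- derivative of the sum
      have hS : HasDerivAt
          (fun w => ∑ j ∈ Finset.range (k+1),
            (Q k j).eval ((1+w)⁻¹) * (Zop^[j] (deriv f)) w)
          (∑ j ∈ Finset.range (k+1),
            ((Q k j).derivative.eval ((1+z)⁻¹) * (-(((1+z)⁻¹)^2)) * (Zop^[j] (deriv f)) z
              + (Q k j).eval ((1+z)⁻¹) * deriv (Zop^[j] (deriv f)) z)) z := by
        apply HasDerivAt.fun_sum
        intro j _
        exact (hasDerivAt_c (Q k j) hz).mul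
          ((deriv_at_of_contDiffOn (Zop_iter_contDiffOn hf' j) hz).hasDerivAt)
      have hDD : deriv (deriv (Zop^[k] f)) z =
          ∑ j ∈ Finset.range (k+1),
            ((Q k j).derivative.eval ((1+z)⁻¹) * (-(((1+z)⁻¹)^2)) * (Zop^[j] (deriv f)) z
              + (Q k j).eval ((1+z)⁻¹) * deriv (Zop^[j] (deriv f)) z) := by
        have hEq : deriv (Zop^[k] f) =ᶠ[nhds z]
            (fun w => ∑ j ∈ Finset.range (k+1),
              (Q k j).eval ((1+w)⁻¹) * (Zop^[j] (deriv f)) w) :=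
          Filter.eventuallyEq_of_mem (isOpen_Ioi.mem_nhds hz) (fun w hw => ih w hw)
        rw [hEq.deriv_eq]
        exact hS.deriv
      have h1 : deriv (Zop^[k+1] f) z =
          ((1+z)⁻¹)^2 * deriv (Zop^[k] f) z
            + (z / (1+z)) * deriv (deriv (Zop^[k] f)) z := by
        rw [Function.iterate_succ_apply']
        exact deriv_Zop (Zop_iter_contDiffOn hf k) hz
      have hZ : ∀ j, (z/(1+z)) * deriv (Zop^[j] (deriv f)) z
          = Zop^[j+1] (deriv f) z := by
        intro j; rw [Function.iterate_succ_apply']; rfl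
      -- rewrite the RHS using the recursion for Q
      have hRHS : ∑ j ∈ Finset.range (k+2), (Q (k+1) j).eval ((1+z)⁻¹) * (Zop^[j] (deriv f)) z
          = ∑ j ∈ Finset.range (k+1),
              ((((1+z)⁻¹)^2 * (Q k j).eval ((1+z)⁻¹)
                  + (((1+z)⁻¹)^3 - ((1+z)⁻¹)^2) * (Q k j).derivative.eval ((1+z)⁻¹))
                  * (Zop^[j] (deriv f)) z
                + (Q k j).eval ((1+z)⁻¹) * (Zop^[j+1] (deriv f)) z) := by
        calc ∑ j ∈ Finset.range (k+2), (Q (k+1) j).eval ((1+z)⁻¹) * (Zop^[j] (deriv f)) z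
            = ∑ j ∈ Finset.range (k+2),
                ((((1+z)⁻¹)^2 * (Q k j).eval ((1+z)⁻¹)
                  + (((1+z)⁻¹)^3 - ((1+z)⁻¹)^2) * (Q k j).derivative.eval ((1+z)⁻¹))
                  * (Zop^[j] (deriv f)) z
                + (if j = 0 then 0 else (Q k (j-1)).eval ((1+z)⁻¹)) * (Zop^[j] (deriv f)) z) := by
              apply Finset.sum_congr rfl
              intro j _
              rw [Q_succ_eval]
              ring
          _ = (∑ j ∈ Finset.range (k+2),
                (((1+z)⁻¹)^2 * (Q k j).eval ((1+z)⁻¹)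
                  + (((1+z)⁻¹)^3 - ((1+z)⁻¹)^2) * (Q k j).derivative.eval ((1+z)⁻¹))
                  * (Zop^[j] (deriv f)) z)
              + ∑ j ∈ Finset.range (k+2),
                (if j = 0 then 0 else (Q k (j-1)).eval ((1+z)⁻¹)) * (Zop^[j] (deriv f)) z :=
              Finset.sum_add_distrib
          _ = (∑ j ∈ Finset.range (k+1),
                (((1+z)⁻¹)^2 * (Q k j).eval ((1+z)⁻¹)
                  + (((1+z)⁻¹)^3 - ((1+z)⁻¹)^2) * (Q k j).derivative.eval ((1+z)⁻¹))
                  * (Zop^[j] (deriv f)) z)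
              + ∑ j ∈ Finset.range (k+1),
                (Q k j).eval ((1+z)⁻¹) * (Zop^[j+1] (deriv f)) z := by
              congr 1
              · rw [Finset.sum_range_succ]
                simp [Q_eq_zero k (k+1) (by omega)]
              · rw [Finset.sum_range_succ']
                simp
          _ = _ := Finset.sum_add_distrib.symm
      rw [h1, ih z hz, hDD, hRHS, Finset.mul_sum, Finset.mul_sum, ← Finset.sum_add_distrib]
      apply Finset.sum_congr rfl
      intro j _
      rw [← hZ j, hp]
      ring

/-- boundedness of polynomial evaluation on `[0,1]` -/
lemma poly_bound (P : Polynomial ℝ) : ∃ M : ℝ, ∀ z ∈ Ici (0:ℝ), |P.eval ((1+z)⁻¹)| ≤ M := by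
  obtain ⟨M, hM⟩ := (isCompact_Icc (a := (0:ℝ)) (b := 1)).exists_bound_of_continuousOn
    (P.continuous_aeval.continuousOn)
  refine ⟨M, fun z hz => ?_⟩
  have h0 : (0:ℝ) ≤ z := hz
  have h1 : (0:ℝ) < 1 + z := by linarith
  have hu : (1+z)⁻¹ ∈ Icc (0:ℝ) 1 := by
    constructor
    · positivity
    · rw [inv_le_one_iff₀]; right; linarith
  simpa using hM _ hu

lemma c_smooth (P : Polynomial ℝ) :
    ContDiffOn ℝ (⊤ : ℕ∞) (fun z : ℝ => P.eval ((1+z)⁻¹)) (Ici (0:ℝ)) := by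
  apply ContDiffOn.mono (s := Ioi (-1:ℝ))
  · have hP : ContDiff ℝ (⊤ : ℕ∞) (fun x : ℝ => P.eval x) := by
      induction P using Polynomial.induction_on' with
      | add p q hp hq => simpa using hp.add hq
      | monomial n a =>
          simpa [Polynomial.eval_monomial] using
            ((contDiff_id (𝕜 := ℝ) (E := ℝ)).pow n).const_smul a
    exact hP.comp_contDiffOn
      (ContDiffOn.inv ((contDiff_const.add contDiff_id).contDiffOn)
        (fun z hz => one_add_ne z hz))
  · intro z hz
    have : (0:ℝ) ≤ z := hz
    show (-1:ℝ) < z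
    linarith

/-- Lemma 2.2(ii): for every `k` there are smooth bounded functions `c̃^k_{j,φ}` on `[0,∞)`,
`j = 0,…,k`, with `c̃^k_{k,φ} = 1`, such that
`∂_z (φ∂_z)^k f = Σ_{j=0}^k c̃^k_{j,φ} (φ∂_z)^j (∂_z f)`. -/
theorem stmt3 (k : ℕ) :
    ∃ c : ℕ → ℝ → ℝ,
      (∀ j ≤ k, ContDiffOn ℝ (⊤ : ℕ∞) (c j) (Ici 0) ∧ ∃ M : ℝ, ∀ z ∈ Ici (0:ℝ), |c j z| ≤ M) ∧
      (∀ z ∈ Ici (0:ℝ), c k z = 1) ∧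
      (∀ f : ℝ → ℝ, ContDiff ℝ (⊤ : ℕ∞) f → ∀ z ∈ Ici (0:ℝ),
        deriv ((Zop^[k]) f) z =
          ∑ j ∈ Finset.range (k + 1), c j z * (Zop^[j]) (deriv f) z) := by
  refine ⟨fun j z => (Q k j).eval ((1+z)⁻¹), ?_, ?_, ?_⟩
  · intro j _
    exact ⟨c_smooth (Q k j), poly_bound (Q k j)⟩
  · intro z _
    simp [Q_diag k]
  · intro f hf z hz
    have hz' : z ∈ Ioi (-1:ℝ) := by
      have : (0:ℝ) ≤ z := hz
      show (-1:ℝ) < z; linarith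
    exact main_id hf k z hz'
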